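/- Every positively 1-homogeneous rank-one convex function f : ℝ^{N×n} → ℝ is bounded below by a linear function; in particular, taking ξ₀ = 0, there exists a linear ℓ with f ≥ ℓ on ℝ^{N×n} and ℓ(0) = f(0) = 0. -/

import Mathlib

open Set

/-- Rank-one convexity: convexity along all directions `a ⊗ b`. -/
def RankOneConvex {N n : ℕ} (f : Matrix (Fin N) (Fin n) ℝ → ℝ) : Prop :=
  ∀ (ξ : Matrix (Fin N) (Fin n) ℝ) (a : Fin N → ℝ) (b : Fin n → ℝ),
    ConvexOn ℝ Set.univ (fun t : ℝ => f (ξ + t • Matrix.vecMulVec a b))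

/-!
The matrix units `single i j 1` are rank-one, so `f` is separately convex. For a separately
convex, positively 1-homogeneous `g`, homogeneity turns upper semicontinuity along lines into
`g (w + t' • v) ≤ g (w + t • v) + (t' - t) * g v` for `t ≤ t'` and each coordinate direction `v`.
Hence `t ↦ g (x + t • v) - t * g v` is nonincreasing, and bounded below by subadditivity along the
coordinate directions, so it decreases to a finite limit `h x`. This `h ≤ g` is again separately
convex and homogeneous, is affine along `v`, and stays affine along every direction along which `g`
was. Straightening along all coordinate directions in turn leaves a function below `g` that is
affine in every coordinate and vanishes at `0`, i.e. a linear one.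
-/

open Filter Topology

theorem ConvexOn.of_tendsto {α E : Type*} [AddCommGroup E] [Module ℝ E] {s : Set E}
    {l : Filter α} [l.NeBot] {F : α → E → ℝ} {L : E → ℝ} (hs : Convex ℝ s)
    (hF : ∀ a, ConvexOn ℝ s (F a)) (hlim : ∀ x ∈ s, Tendsto (fun a => F a x) l (𝓝 (L x))) :
    ConvexOn ℝ s L :=
  ⟨hs, fun x hx y hy a b ha hb hab =>
    le_of_tendsto_of_tendsto (hlim _ (hs hx hy ha hb hab))
      (((hlim x hx).const_smul a).add ((hlim y hy).const_smul b))
      (Eventually.of_forall fun i => (hF i).2 hx hy ha hb hab)⟩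

theorem ConvexOn.le_add_mul_of_eventually_le {φ : ℝ → ℝ} (hφ : ConvexOn ℝ univ φ) {c : ℝ}
    (hc : ∀ ε > 0, ∀ᶠ T in atTop, φ T ≤ T * (c + ε)) {t t' : ℝ} (htt' : t ≤ t') :
    φ t' ≤ φ t + (t' - t) * c := by
  rcases htt'.eq_or_lt with rfl | htt'
  · simp
  suffices (φ t' - φ t) / (t' - t) ≤ c by
    rw [div_le_iff₀ (sub_pos.2 htt')] at this
    linarith
  refine le_of_forall_pos_le_add fun ε hε => ?_
  -- the secant slopes from `t` increase towards the asymptotic slope, which is at most `c + ε`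
  have hlim : Tendsto (fun T => c + ε + (t * (c + ε) - φ t) / (T - t)) atTop (𝓝 (c + ε + 0)) :=
    tendsto_const_nhds.add <| tendsto_const_nhds.div_atTop <|
      tendsto_atTop_add_const_right _ _ tendsto_id
  rw [add_zero] at hlim
  refine ge_of_tendsto hlim ?_
  filter_upwards [hc ε hε, eventually_gt_atTop t'] with T hT hT'
  have hTt : 0 < T - t := by linarith
  calc (φ t' - φ t) / (t' - t)
      ≤ (φ T - φ t) / (T - t) :=
        hφ.secant_mono (mem_univ t) (mem_univ t') (mem_univ T) htt'.ne' (by linarith) hT'.le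
    _ ≤ (T * (c + ε) - φ t) / (T - t) := by gcongr
    _ = c + ε + (t * (c + ε) - φ t) / (T - t) := by field_simp; ring

theorem map_add_sum_le_of_subadditive {M ι : Type*} [AddCommMonoid M] {g : M → ℝ} {v : ι → M}
    (S : Finset ι) (hv : ∀ i ∈ S, ∀ z, g (z + v i) ≤ g z + g (v i)) (z : M) :
    g (z + ∑ i ∈ S, v i) ≤ g z + ∑ i ∈ S, g (v i) := by
  classical
  induction S using Finset.induction_on generalizing z with
  | empty => simp
  | insert q S hq ih =>
    rw [Finset.sum_insert hq, Finset.sum_insert hq, ← add_assoc]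
    have := ih (fun i hi => hv i (Finset.mem_insert_of_mem hi)) (z + v q)
    linarith [hv q (Finset.mem_insert_self q S) z]

section LineConvexity

variable {V : Type*} [AddCommGroup V] [Module ℝ V]

def ConvexAlong (g : V → ℝ) (v : V) : Prop :=
  ∀ z, ConvexOn ℝ univ fun t : ℝ => g (z + t • v)

def AffineAlong (g : V → ℝ) (v : V) (c : ℝ) : Prop :=
  ∀ x (s : ℝ), g (x + s • v) = g x + s * c

def PosHomogeneous (g : V → ℝ) : Prop :=
  ∀ t : ℝ, 0 < t → ∀ x, g (t • x) = t * g x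

def SeparatelyConvex {ι : Type*} (b : Module.Basis ι ℝ V) (g : V → ℝ) : Prop :=
  ∀ i, ConvexAlong g (b i)

variable {g : V → ℝ}

theorem ConvexAlong.smul {v : V} (hv : ConvexAlong g v) (r : ℝ) : ConvexAlong g (r • v) :=
  fun z => by
    simpa [Function.comp_def, smul_smul, mul_comm r] using
      (hv z).comp_linearMap (LinearMap.mul ℝ ℝ r)

theorem PosHomogeneous.map_zero (hg : PosHomogeneous g) : g 0 = 0 := by
  have h := hg 2 two_pos 0
  rw [smul_zero] at h
  linarith

theorem PosHomogeneous.map_smul_of_nonneg (hg : PosHomogeneous g) {t : ℝ} (ht : 0 ≤ t) (x : V) :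
    g (t • x) = t * g x := by
  rcases ht.eq_or_lt with rfl | ht
  · simp [hg.map_zero]
  · exact hg t ht x

theorem AffineAlong.map_add_sum {ι : Type*} {v : ι → V} {c : ι → ℝ} (S : Finset ι)
    (hv : ∀ i ∈ S, AffineAlong g (v i) (c i)) (z : V) (s : ι → ℝ) :
    g (z + ∑ i ∈ S, s i • v i) = g z + ∑ i ∈ S, s i * c i := by
  classical
  induction S using Finset.induction_on generalizing z with
  | empty => simp
  | insert q S hq ih =>
    rw [Finset.sum_insert hq, Finset.sum_insert hq, ← add_assoc, add_right_comm,
      hv q (Finset.mem_insert_self q S), ih (fun i hi => hv i (Finset.mem_insert_of_mem hi))]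
    ring

theorem eventually_map_add_smul_sum_lt {ι : Type*} {e : ι → V} (he : ∀ i, ConvexAlong g (e i))
    (S : Finset ι) (z : V) {ε : ℝ} (hε : 0 < ε) :
    ∀ᶠ s in 𝓝[>] (0 : ℝ), g (z + s • ∑ i ∈ S, e i) < g z + ε := by
  classical
  induction S using Finset.induction_on generalizing z ε with
  | empty => simpa using hε
  | insert q S hq ih =>
    have hsmall : ∀ᶠ s in 𝓝[>] (0 : ℝ), s * (g (z + e q) + 1 - g z - ε / 2) < ε / 2 := by
      have : Tendsto (fun s : ℝ => s * (g (z + e q) + 1 - g z - ε / 2)) (𝓝[>] 0) (𝓝 (0 * _)) :=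
        (tendsto_nhdsWithin_of_tendsto_nhds tendsto_id).mul_const _
      rw [zero_mul] at this
      exact this.eventually (gt_mem_nhds (half_pos hε))
    filter_upwards [ih z (half_pos hε), ih (z + e q) one_pos, hsmall, self_mem_nhdsWithin,
      Ioo_mem_nhdsGT one_pos] with s h₀ h₁ hsC hs hs1
    -- the point lies at parameter `s` on the segment from `z + s • ∑ e i` to `z + e q + s • ∑ e i`
    have hcvx := (he q (z + s • ∑ i ∈ S, e i)).2 (mem_univ 0) (mem_univ 1)
      (sub_nonneg.2 hs1.2.le) (le_of_lt hs) (sub_add_cancel 1 s)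
    simp only [smul_eq_mul, mul_zero, mul_one, zero_add, zero_smul, add_zero, one_smul] at hcvx
    rw [Finset.sum_insert hq, smul_add, add_comm (s • e q), ← add_assoc]
    rw [add_right_comm] at h₁
    linarith [mul_lt_mul_of_pos_left h₀ (sub_pos.2 hs1.2), mul_lt_mul_of_pos_left h₁ hs]

/-- For the separately convex, positively homogeneous `g` considered below, the infimum is the
limit as `t → ∞`. -/
noncomputable def straighten (g : V → ℝ) (v x : V) : ℝ :=
  ⨅ t : ℝ, (g (x + t • v) - t * g v)

namespace SeparatelyConvex

variable {ι : Type*} [Fintype ι] {b : Module.Basis ι ℝ V}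

theorem eventually_map_add_smul_lt (hg : SeparatelyConvex b g) (z w : V) {ε : ℝ} (hε : 0 < ε) :
    ∀ᶠ s in 𝓝[>] (0 : ℝ), g (z + s • w) < g z + ε := by
  simpa only [Finset.smul_sum, b.sum_repr] using
    eventually_map_add_smul_sum_lt (fun i => (hg i).smul (b.repr w i)) Finset.univ z hε

theorem eventually_map_add_smul_le (hg : SeparatelyConvex b g) (hhom : PosHomogeneous g)
    (v w : V) {ε : ℝ} (hε : 0 < ε) : ∀ᶠ T in atTop, g (w + T • v) ≤ T * (g v + ε) := by
  filter_upwards [tendsto_inv_atTop_nhdsGT_zero.eventually (hg.eventually_map_add_smul_lt v w hε),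
    eventually_gt_atTop 0] with T hT hT0
  have hwv : w + T • v = T • (v + T⁻¹ • w) := by
    rw [smul_add, smul_smul, mul_inv_cancel₀ hT0.ne', one_smul, add_comm]
  rw [hwv, hhom T hT0]
  exact mul_le_mul_of_nonneg_left hT.le hT0.le

theorem map_add_smul_le (hg : SeparatelyConvex b g) (hhom : PosHomogeneous g) {v : V}
    (hv : ConvexAlong g v) (w : V) {t t' : ℝ} (htt' : t ≤ t') :
    g (w + t' • v) ≤ g (w + t • v) + (t' - t) * g v :=
  (hv w).le_add_mul_of_eventually_le (fun _ hε => hg.eventually_map_add_smul_le hhom v w hε) htt'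

theorem map_add_le (hg : SeparatelyConvex b g) (hhom : PosHomogeneous g) {v : V}
    (hv : ConvexAlong g v) (w : V) : g (w + v) ≤ g w + g v := by
  simpa using hg.map_add_smul_le hhom hv w zero_le_one

theorem sub_sum_le_map_add (hg : SeparatelyConvex b g) (hhom : PosHomogeneous g) (x y : V) :
    g y - ∑ i, g ((-b.repr x i) • b i) ≤ g (y + x) := by
  have h := map_add_sum_le_of_subadditive Finset.univ
    (fun i _ => hg.map_add_le hhom ((hg i).smul (-b.repr x i))) (y + x)
  simp only [neg_smul, Finset.sum_neg_distrib, b.sum_repr, add_neg_cancel_right] at h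
  simp only [neg_smul]
  linarith

theorem antitone_map_add_smul_sub (hg : SeparatelyConvex b g) (hhom : PosHomogeneous g) {v : V}
    (hv : ConvexAlong g v) (x : V) : Antitone fun t : ℝ => g (x + t • v) - t * g v :=
  fun t t' htt' => by
    have := hg.map_add_smul_le hhom hv x htt'
    linarith

theorem tendsto_straighten (hg : SeparatelyConvex b g) (hhom : PosHomogeneous g) {v : V}
    (hv : ConvexAlong g v) (x : V) :
    Tendsto (fun t : ℝ => g (x + t • v) - t * g v) atTop (𝓝 (straighten g v x)) := by
  have hanti := hg.antitone_map_add_smul_sub hhom hv x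
  refine tendsto_atTop_ciInf hanti ⟨-∑ i, g ((-b.repr x i) • b i), ?_⟩
  rintro _ ⟨t, rfl⟩
  refine le_trans ?_ (hanti (le_max_left t 0))
  have := hg.sub_sum_le_map_add hhom x (max t 0 • v)
  rw [hhom.map_smul_of_nonneg (le_max_right t 0), add_comm] at this
  dsimp only
  linarith

theorem straighten_le (hg : SeparatelyConvex b g) (hhom : PosHomogeneous g) {v : V}
    (hv : ConvexAlong g v) (x : V) : straighten g v x ≤ g x := by
  simpa using (hg.antitone_map_add_smul_sub hhom hv x).le_of_tendsto
    (hg.tendsto_straighten hhom hv x) 0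

theorem affineAlong_straighten (hg : SeparatelyConvex b g) (hhom : PosHomogeneous g) {v : V}
    (hv : ConvexAlong g v) : AffineAlong (straighten g v) v (g v) := fun x s => by
  refine tendsto_nhds_unique (hg.tendsto_straighten hhom hv (x + s • v))
    ((((hg.tendsto_straighten hhom hv x).comp
      (tendsto_atTop_add_const_left _ s tendsto_id)).add_const (s * g v)).congr fun t => ?_)
  simp only [Function.comp_apply, id, add_smul, add_assoc]
  ring

theorem straighten_affineAlong (hg : SeparatelyConvex b g) (hhom : PosHomogeneous g) {v : V}
    (hv : ConvexAlong g v) {w : V} {c : ℝ} (hw : AffineAlong g w c) :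
    AffineAlong (straighten g v) w c := fun x s => by
  refine tendsto_nhds_unique (hg.tendsto_straighten hhom hv (x + s • w))
    (((hg.tendsto_straighten hhom hv x).add_const (s * c)).congr fun t => ?_)
  rw [add_right_comm, hw]
  ring

theorem posHomogeneous_straighten (hg : SeparatelyConvex b g) (hhom : PosHomogeneous g) {v : V}
    (hv : ConvexAlong g v) : PosHomogeneous (straighten g v) := fun l hl x => by
  refine tendsto_nhds_unique (hg.tendsto_straighten hhom hv (l • x))
    ((((hg.tendsto_straighten hhom hv x).comp (tendsto_id.atTop_div_const hl)).const_mul l).congr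
      fun t => ?_)
  have hx : l • x + t • v = l • (x + (t / l) • v) := by
    rw [smul_add, smul_smul, mul_div_cancel₀ _ hl.ne']
  simp only [Function.comp_apply, id, hx, hhom l hl]
  field_simp

theorem straighten_convexAlong (hg : SeparatelyConvex b g) (hhom : PosHomogeneous g) {v : V}
    (hv : ConvexAlong g v) {u : V} (hu : ConvexAlong g u) : ConvexAlong (straighten g v) u :=
  fun z => ConvexOn.of_tendsto convex_univ (l := atTop)
    (fun t => ((hu (z + t • v)).add_const (-(t * g v))).congr fun τ _ => by
      rw [Pi.add_apply, add_right_comm z, sub_eq_add_neg])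
    (fun τ _ => hg.tendsto_straighten hhom hv (z + τ • u))

theorem exists_le_affineAlong (hg : SeparatelyConvex b g) (hhom : PosHomogeneous g)
    (S : Finset ι) :
    ∃ h : V → ℝ, SeparatelyConvex b h ∧ PosHomogeneous h ∧ (∀ x, h x ≤ g x) ∧
      ∀ i ∈ S, ∃ c, AffineAlong h (b i) c := by
  classical
  induction S using Finset.induction_on with
  | empty => exact ⟨g, hg, hhom, fun _ => le_rfl, by simp⟩
  | insert q S hq ih =>
    obtain ⟨h, hh, hhom_h, hle, haff⟩ := ih
    refine ⟨straighten h (b q), fun i => hh.straighten_convexAlong hhom_h (hh q) (hh i),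
      hh.posHomogeneous_straighten hhom_h (hh q),
      fun x => (hh.straighten_le hhom_h (hh q) x).trans (hle x), ?_⟩
    simp only [Finset.mem_insert, forall_eq_or_imp]
    exact ⟨⟨h (b q), hh.affineAlong_straighten hhom_h (hh q)⟩,
      fun i hi => (haff i hi).imp fun c hc => hh.straighten_affineAlong hhom_h (hh q) hc⟩

theorem exists_linearMap_le (hg : SeparatelyConvex b g) (hhom : PosHomogeneous g) :
    ∃ ℓ : V →ₗ[ℝ] ℝ, ∀ x, ℓ x ≤ g x := by
  obtain ⟨h, -, hhom_h, hle, haff⟩ := hg.exists_le_affineAlong hhom Finset.univ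
  choose c hc using fun i => haff i (Finset.mem_univ i)
  refine ⟨∑ i, c i • b.coord i, fun x => ?_⟩
  have hx := AffineAlong.map_add_sum Finset.univ (fun i _ => hc i) 0 (b.repr x)
  rw [zero_add, b.sum_repr, hhom_h.map_zero, zero_add] at hx
  simpa [hx, mul_comm] using hle x

end SeparatelyConvex

end LineConvexity

/-- a positively 1-homogeneous rank-one convex function is bounded
below by a linear function supporting it at `0`, and `f 0 = 0`. -/
theorem rankOneConvex_homog_linear_lower_bound
    {N n : ℕ} (f : Matrix (Fin N) (Fin n) ℝ → ℝ)
    (hrc : RankOneConvex f)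
    (hhom : ∀ t : ℝ, 0 < t → ∀ ξ : Matrix (Fin N) (Fin n) ℝ, f (t • ξ) = t * f ξ) :
    f 0 = 0 ∧ ∃ ℓ : Matrix (Fin N) (Fin n) ℝ →ₗ[ℝ] ℝ,
      ℓ 0 = f 0 ∧ ∀ ξ, ℓ ξ ≤ f ξ := by
  have hpos : PosHomogeneous f := hhom
  have hsep : SeparatelyConvex (Matrix.stdBasis ℝ (Fin N) (Fin n)) f := fun ⟨i, j⟩ z => by
    simpa [Matrix.stdBasis_eq_single, Matrix.single_eq_single_vecMulVec_single] using
      hrc z (Pi.single i 1) (Pi.single j 1)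
  obtain ⟨ℓ, hℓ⟩ := hsep.exists_linearMap_le hpos
  exact ⟨hpos.map_zero, ℓ, by rw [map_zero, hpos.map_zero], hℓ⟩
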